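/- Krawczyk–Speicher product formula as a corollary: if ρ is the interval partition with blocks {1,…,n_1}, {n_1+1,…,n_2}, …, {n_{r-1}+1,…,n}, then C_r(X_1⋯X_{n_1}, X_{n_1+1}⋯X_{n_2}, …, X_{n_{r-1}+1}⋯X_n) = ∑_{τ ∈ NC_n : τ ∨ ρ = 1̂_n} C_τ(X_1,…,X_n). -/

import Mathlib

open scoped Classical

instance {α : Type*} [Finite α] : Finite (Setoid α) :=
  Finite.of_injective (fun s : Setoid α => s.r) fun s t h => by
    cases s; cases t; congr

noncomputable instance {α : Type*} [Finite α] : Fintype (Setoid α) := Fintype.ofFinite _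

/-- The blocks (equivalence classes) of a partition, as a finset of finsets. -/
noncomputable def blocks {α : Type*} [Fintype α] (π : Setoid α) : Finset (Finset α) :=
  Finset.univ.image (fun i => Finset.univ.filter (fun j => π.r i j))

/-- The ordered (noncommutative) product of the variables `X i`, `i ∈ b`,
taken in increasing order of the indices. -/
noncomputable def orderedProd {α A : Type*} [LinearOrder α] [Ring A] (b : Finset α)
    (X : α → A) : A :=
  ((b.sort (· ≤ ·)).map X).prod

/-- A partition of `{1,…,n}` (as a setoid on `Fin n`) is noncrossing if there are no
`i < j < k < l` with `i ∼ k`, `j ∼ l` but `i ≁ j`. -/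
def IsNoncrossing {n : ℕ} (π : Setoid (Fin n)) : Prop :=
  ¬ ∃ i j k l : Fin n, i < j ∧ j < k ∧ k < l ∧ π.r i k ∧ π.r j l ∧ ¬ π.r i j

/-- The noncrossing partition lattice `NC_n` (as a subtype of setoids on `Fin n`). -/
abbrev NCPart (n : ℕ) := {π : Setoid (Fin n) // IsNoncrossing π}

/-! Pulling back along `g` identifies `NC_r` with the interval `[ρ, 1̂_n]` of `NC_n` and turns
the moments of the block products `Y` into moments of the `X`. Expanding these moments into
cumulants by Möbius inversion, the left-hand side becomes `∑_σ C_σ ∑_{π : σ ≤ ĝ π} μ(π, 1̂_r)`,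
where `ĝ π` is the pullback of `π`. The inner sum runs over the upper interval of `NC_r` above the
preimage of `σ ∨ ρ`, so it equals `1` if `σ ∨ ρ = 1̂_n` and `0` otherwise. -/

section Mobius

open Finset

variable {ι R : Type*} [Fintype ι] [PartialOrder ι] [DecidableEq ι] [CommRing R]

def IsMobiusFun (mu : ι → ι → R) : Prop :=
  ∀ π σ : ι, π ≤ σ →
    ∑ ρ ∈ univ.filter (fun ρ => π ≤ ρ ∧ ρ ≤ σ), mu ρ σ = if π = σ then 1 else 0

variable {mu : ι → ι → R}

theorem IsMobiusFun.sum_right (hmu : IsMobiusFun mu) (π θ : ι) :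
    ∑ σ ∈ univ.filter (fun σ => π ≤ σ ∧ σ ≤ θ), mu π σ = if π = θ then 1 else 0 := by
  let zeta : Matrix ι ι R := fun a b => if a ≤ b then 1 else 0
  let mobius : Matrix ι ι R := fun a b => if a ≤ b then mu a b else 0
  have hzeta : zeta * mobius = 1 := by
    ext a b
    rw [Matrix.mul_apply, Matrix.one_apply]
    by_cases hab : a ≤ b
    · rw [← hmu a b hab, sum_filter]
      refine sum_congr rfl fun c _ => ?_
      by_cases hac : a ≤ c <;> by_cases hcb : c ≤ b <;> simp [zeta, mobius, hac, hcb]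
    · rw [if_neg (fun h => hab h.le)]
      refine sum_eq_zero fun c _ => ?_
      by_cases hac : a ≤ c
      · have hcb : ¬ c ≤ b := fun hcb => hab (hac.trans hcb)
        simp [zeta, mobius, hcb]
      · simp [zeta, hac]
  -- a one-sided inverse of the zeta matrix is two-sided
  have hmobius : (mobius * zeta) π θ = (1 : Matrix ι ι R) π θ := by
    rw [mul_eq_one_comm.mp hzeta]
  rw [Matrix.mul_apply, Matrix.one_apply] at hmobius
  rw [← hmobius, sum_filter]
  refine sum_congr rfl fun σ _ => ?_
  by_cases hπσ : π ≤ σ <;> by_cases hσθ : σ ≤ θ <;> simp [zeta, mobius, hπσ, hσθ]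

theorem IsMobiusFun.sum_le_eq_of_eq_sum_le_mul (hmu : IsMobiusFun mu) {M C : ι → R}
    (hC : ∀ τ, C τ = ∑ π ∈ univ.filter (· ≤ τ), M π * mu π τ) (θ : ι) :
    ∑ σ ∈ univ.filter (· ≤ θ), C σ = M θ := by
  calc ∑ σ ∈ univ.filter (· ≤ θ), C σ
      = ∑ π, ∑ σ ∈ univ.filter (fun σ => π ≤ σ ∧ σ ≤ θ), M π * mu π σ := by
        simp only [hC]
        exact sum_comm' fun σ π => by simp [and_comm]
    _ = M θ := by simp [← mul_sum, hmu.sum_right]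

theorem IsMobiusFun.sum_sum_le_mul_eq_sum_isLUB {P : Type*} [Fintype P] [PartialOrder P]
    (hmu : IsMobiusFun mu) {t : ι} (ht : ∀ π, π ≤ t) (F : ι ↪o P) {ρ : P}
    (hF : Set.range F = Set.Ici ρ) (hjoin : ∀ σ, ∃ m, IsLUB {σ, ρ} m) (c : P → R) :
    ∑ π, (∑ σ ∈ univ.filter (· ≤ F π), c σ) * mu π t =
      ∑ σ ∈ univ.filter (fun σ => IsLUB {σ, ρ} (F t)), c σ := by
  have key : ∀ σ, ∑ π ∈ univ.filter (fun π => σ ≤ F π), mu π t =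
      if IsLUB {σ, ρ} (F t) then 1 else 0 := by
    intro σ
    -- `{π | σ ≤ F π}` is the upper interval above the preimage of `σ ⊔ ρ`
    obtain ⟨m, hm⟩ := hjoin σ
    obtain ⟨π₀, rfl⟩ : m ∈ Set.range F := hF ▸ hm.1 (by simp)
    have hρF : ∀ π, ρ ≤ F π := fun π => hF.subset (Set.mem_range_self π)
    have hfilter : univ.filter (fun π => σ ≤ F π) = univ.filter (fun π => π₀ ≤ π ∧ π ≤ t) := by
      ext π
      simp only [mem_filter, mem_univ, true_and, ht, and_true, ← F.le_iff_le]
      refine ⟨fun h => hm.2 ?_, fun h => (hm.1 (by simp)).trans h⟩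
      rintro _ (rfl | rfl)
      exacts [h, hρF π]
    have hlub : IsLUB {σ, ρ} (F t) ↔ π₀ = t :=
      ⟨fun h => F.injective (hm.unique h), fun h => h ▸ hm⟩
    rw [hfilter, hmu π₀ t (ht π₀)]
    simp only [hlub]
  calc ∑ π, (∑ σ ∈ univ.filter (· ≤ F π), c σ) * mu π t
      = ∑ σ, ∑ π ∈ univ.filter (fun π => σ ≤ F π), c σ * mu π t := by
        simp only [sum_mul]
        exact sum_comm' fun π σ => by simp
    _ = _ := by simp [← mul_sum, key, sum_filter]

end Mobius

section Partitions

open Finset Function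

theorem Monotone.monotone_surjInv {α β : Type*} [LinearOrder α] [PartialOrder β] {g : α → β}
    (hg : Monotone g) (hgs : Surjective g) : Monotone (surjInv hgs) := by
  intro k l hkl
  by_contra hlt
  have hlk := hg (le_of_not_ge hlt)
  rw [surjInv_eq hgs, surjInv_eq hgs] at hlk
  exact hlt (le_of_eq (congrArg _ (le_antisymm hkl hlk)))

variable {α β : Type*} [Fintype α] {g : α → β}

theorem Function.Surjective.injective_filter_mem [DecidableEq β] (hgs : Surjective g) :
    Injective fun B : Finset β => univ.filter fun i => g i ∈ B := fun B B' h => by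
  ext k
  obtain ⟨i, rfl⟩ := hgs k
  simpa using congrArg (i ∈ ·) h

theorem blocks_comap [Fintype β] [DecidableEq β] (hgs : Surjective g) (π : Setoid β) :
    blocks (π.comap g) = (blocks π).map ⟨_, hgs.injective_filter_mem⟩ := by
  ext b
  simp only [blocks, mem_map, mem_image, mem_univ, true_and, exists_exists_eq_and,
    Embedding.coeFn_mk]
  constructor
  · rintro ⟨i, rfl⟩
    exact ⟨g i, by ext j; simp [Setoid.comap_rel]⟩
  · rintro ⟨k, rfl⟩
    obtain ⟨i, rfl⟩ := hgs k
    exact ⟨i, by ext j; simp [Setoid.comap_rel]⟩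

variable [LinearOrder α] [LinearOrder β]

theorem sort_filter_mem_eq_flatMap (hg : Monotone g) (B : Finset β) :
    (univ.filter fun i => g i ∈ B).sort (· ≤ ·) =
      (B.sort (· ≤ ·)).flatMap fun k => (univ.filter fun i => g i = k).sort (· ≤ ·) := by
  refine (sortedLT_sort _).eq_of_mem_iff (List.sortedLT_iff_pairwise.2 ?_) fun i => by simp
  refine List.pairwise_flatMap.2 ⟨fun k _ => (sortedLT_sort _).pairwise, ?_⟩
  refine (sortedLT_sort B).pairwise.imp_of_mem fun {k l} _ _ hkl i hi j hj => ?_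
  simp only [mem_sort, mem_filter, mem_univ, true_and] at hi hj
  exact lt_of_not_ge fun hji => (hg hji).not_gt (hi ▸ hj ▸ hkl)

theorem orderedProd_filter_mem {A : Type*} [Ring A] (hg : Monotone g) (X : α → A)
    (B : Finset β) :
    orderedProd (univ.filter fun i => g i ∈ B) X =
      orderedProd B fun k => orderedProd (univ.filter fun i => g i = k) X := by
  rw [orderedProd, sort_filter_mem_eq_flatMap hg, List.map_flatMap, List.flatMap_def,
    List.prod_flatten, List.map_map]
  rfl

theorem prod_blocks_comap_orderedProd [Fintype β] {M A : Type*} [CommMonoid M] [Ring A]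
    (hg : Monotone g) (hgs : Surjective g) (f : A → M) (X : α → A) (π : Setoid β) :
    ∏ b ∈ blocks (π.comap g), f (orderedProd b X) =
      ∏ B ∈ blocks π, f (orderedProd B fun k => orderedProd (univ.filter fun i => g i = k) X) := by
  rw [blocks_comap hgs, prod_map]
  simp only [Embedding.coeFn_mk, orderedProd_filter_mem hg]

end Partitions

section Noncrossing

open Function

variable {n r : ℕ}

theorem IsNoncrossing.comap {g : Fin n → Fin r} (hg : Monotone g) {π : Setoid (Fin r)}
    (hπ : IsNoncrossing π) : IsNoncrossing (π.comap g) := by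
  rintro ⟨i, j, k, l, hij, hjk, hkl, hik, hjl, hnij⟩
  simp only [Setoid.comap_rel] at hik hjl hnij
  refine hπ ⟨g i, g j, g k, g l, ?_, ?_, ?_, hik, hjl, hnij⟩
  · exact (hg hij.le).lt_of_ne fun h => hnij (h ▸ π.refl' _)
  · exact (hg hjk.le).lt_of_ne fun h => hnij (h ▸ hik)
  · exact (hg hkl.le).lt_of_ne fun h => hnij (π.trans' hik (π.symm' (h ▸ hjl)))

theorem IsNoncrossing.sInf {S : Set (Setoid (Fin n))} (hS : ∀ π ∈ S, IsNoncrossing π) :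
    IsNoncrossing (sInf S) := by
  rintro ⟨i, j, k, l, hij, hjk, hkl, hik, hjl, hnij⟩
  obtain ⟨π, hπS, hπij⟩ : ∃ π ∈ S, ¬ π.r i j := by simpa [Setoid.sInf_iff] using hnij
  exact hS π hπS ⟨i, j, k, l, hij, hjk, hkl, Setoid.sInf_iff.mp hik π hπS,
    Setoid.sInf_iff.mp hjl π hπS, hπij⟩

namespace NCPart

theorem exists_isLUB_pair (σ ρ : NCPart n) : ∃ m : NCPart n, IsLUB {σ, ρ} m := by
  let S := Subtype.val '' upperBounds {σ, ρ}
  have hS : ∀ t ∈ S, IsNoncrossing t := by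
    rintro _ ⟨θ, -, rfl⟩
    exact θ.2
  refine ⟨⟨sInf S, IsNoncrossing.sInf hS⟩, fun θ hθ => ?_, fun θ hθ => ?_⟩
  · refine (le_sInf ?_ : θ.1 ≤ sInf S)
    rintro _ ⟨θ', hθ', rfl⟩
    exact hθ' hθ
  · exact (sInf_le ⟨θ, hθ, rfl⟩ : sInf S ≤ θ.1)

def comap {g : Fin n → Fin r} (hg : Monotone g) (hgs : Surjective g) : NCPart r ↪o NCPart n :=
  OrderEmbedding.ofMapLEIff (fun π => ⟨π.1.comap g, π.2.comap hg⟩) fun π π' => by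
    refine ⟨fun h k l hkl => ?_, fun h i j hij => h hij⟩
    obtain ⟨i, rfl⟩ := hgs k
    obtain ⟨j, rfl⟩ := hgs l
    exact h hkl

theorem range_comap {g : Fin n → Fin r} (hg : Monotone g) (hgs : Surjective g) {ρ : NCPart n}
    (hρ : ∀ i j, ρ.val.r i j ↔ g i = g j) : Set.range (comap hg hgs) = Set.Ici ρ := by
  ext θ
  refine ⟨?_, fun hθ => ?_⟩
  · rintro ⟨π, rfl⟩ i j hij
    exact (show π.1.r (g i) (g j) from (hρ i j).1 hij ▸ π.1.refl' _)
  · let s := surjInv hgs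
    refine ⟨⟨θ.1.comap s, θ.2.comap (hg.monotone_surjInv hgs)⟩,
      Subtype.ext (Setoid.ext fun i j => ?_)⟩
    have hi : θ.1.r (s (g i)) i := hθ ((hρ _ _).2 (surjInv_eq hgs _))
    have hj : θ.1.r (s (g j)) j := hθ ((hρ _ _).2 (surjInv_eq hgs _))
    exact ⟨fun h => θ.1.trans' (θ.1.trans' (θ.1.symm' hi) h) hj,
      fun h => θ.1.trans' (θ.1.trans' hi h) (θ.1.symm' hj)⟩

end NCPart

end Noncrossing

theorem stmt11_general {n r : ℕ} {A : Type*} [Ring A] [Algebra ℂ A]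
    (φ : A →ₗ[ℂ] ℂ)
    (X : Fin n → A)
    (g : Fin n → Fin r) (hgmono : Monotone g) (hgsurj : Function.Surjective g)
    -- the interval partition `ρ` with blocks the fibers of `g`
    (ρ : NCPart n) (hρ : ∀ i j, ρ.val.r i j ↔ g i = g j)
    -- the products of the `X_i` along the blocks of `ρ`
    (Y : Fin r → A)
    (hY : ∀ k, Y k = orderedProd (Finset.univ.filter (fun i => g i = k)) X)
    -- Möbius functions of `NC_n` and `NC_r`
    (mu : NCPart n → NCPart n → ℂ)
    (hmu : ∀ π σ : NCPart n, π ≤ σ →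
      (∑ ρ' ∈ Finset.univ.filter (fun ρ' => π ≤ ρ' ∧ ρ' ≤ σ), mu ρ' σ) =
        if π = σ then 1 else 0)
    (mur : NCPart r → NCPart r → ℂ)
    (hmur : ∀ π σ : NCPart r, π ≤ σ →
      (∑ ρ' ∈ Finset.univ.filter (fun ρ' => π ≤ ρ' ∧ ρ' ≤ σ), mur ρ' σ) =
        if π = σ then 1 else 0)
    -- free cumulants of the `X_i` over `NC_n`
    (C : NCPart n → ℂ)
    (hC : ∀ τ, C τ = ∑ π ∈ Finset.univ.filter (fun π => π ≤ τ),
      (∏ b ∈ blocks π.val, φ (orderedProd b X)) * mu π τ)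
    -- the full partitions `1̂_n ∈ NC_n` and `1̂_r ∈ NC_r`
    (topn : NCPart n) (htopn : topn.val = ⊤)
    (topr : NCPart r) (htopr : topr.val = ⊤) :
    (∑ π ∈ Finset.univ.filter (fun π : NCPart r => π ≤ topr),
        (∏ b ∈ blocks π.val, φ (orderedProd b Y)) * mur π topr)
      = ∑ τ ∈ Finset.univ.filter (fun τ => IsLUB ({τ, ρ} : Set (NCPart n)) topn),
          C τ := by
  let F := NCPart.comap hgmono hgsurj
  have hle_topr : ∀ π : NCPart r, π ≤ topr := fun π => (le_top : π.1 ≤ ⊤).trans_eq htopr.symm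
  have hF_topr : F topr = topn := Subtype.ext <| by
    change topr.1.comap g = topn.1
    rw [htopr, htopn]
    rfl
  have hmoments : ∀ π : NCPart r, ∏ b ∈ blocks π.val, φ (orderedProd b Y) =
      ∑ σ ∈ Finset.univ.filter (· ≤ F π), C σ := by
    intro π
    rw [IsMobiusFun.sum_le_eq_of_eq_sum_le_mul hmu hC, funext hY]
    exact (prod_blocks_comap_orderedProd hgmono hgsurj φ X π.1).symm
  rw [Finset.filter_true_of_mem fun π _ => hle_topr π]
  simp only [hmoments]
  rw [IsMobiusFun.sum_sum_le_mul_eq_sum_isLUB hmur hle_topr F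
    (NCPart.range_comap hgmono hgsurj hρ) (NCPart.exists_isLUB_pair · ρ), hF_topr]

/-- The Krawczyk–Speicher formula for free cumulants with products as entries:
if `ρ` is the interval partition with blocks `{1,…,n₁}, {n₁+1,…,n₂}, …` (encoded
by a monotone surjection `g : Fin n → Fin r` whose fibers are the blocks), then
`C_r(X_1⋯X_{n₁}, …, X_{n_{r-1}+1}⋯X_n) = ∑_{τ ∈ NC_n, τ ∨ ρ = 1̂_n} C_τ(X_1,…,X_n)`. -/
theorem stmt11 {n r : ℕ} {A : Type*} [Ring A] [Algebra ℂ A]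
    (φ : A →ₗ[ℂ] ℂ) (hφ : φ 1 = 1)
    (X : Fin n → A)
    (g : Fin n → Fin r) (hgmono : Monotone g) (hgsurj : Function.Surjective g)
    -- the interval partition `ρ` with blocks the fibers of `g`
    (ρ : NCPart n) (hρ : ∀ i j, ρ.val.r i j ↔ g i = g j)
    -- the products of the `X_i` along the blocks of `ρ`
    (Y : Fin r → A)
    (hY : ∀ k, Y k = orderedProd (Finset.univ.filter (fun i => g i = k)) X)
    -- Möbius functions of `NC_n` and `NC_r`
    (mu : NCPart n → NCPart n → ℂ)
    (hmu : ∀ π σ : NCPart n, π ≤ σ →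
      (∑ ρ' ∈ Finset.univ.filter (fun ρ' => π ≤ ρ' ∧ ρ' ≤ σ), mu ρ' σ) =
        if π = σ then 1 else 0)
    (mur : NCPart r → NCPart r → ℂ)
    (hmur : ∀ π σ : NCPart r, π ≤ σ →
      (∑ ρ' ∈ Finset.univ.filter (fun ρ' => π ≤ ρ' ∧ ρ' ≤ σ), mur ρ' σ) =
        if π = σ then 1 else 0)
    -- free cumulants of the `X_i` over `NC_n`
    (C : NCPart n → ℂ)
    (hC : ∀ τ, C τ = ∑ π ∈ Finset.univ.filter (fun π => π ≤ τ),
      (∏ b ∈ blocks π.val, φ (orderedProd b X)) * mu π τ)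
    -- the full partitions `1̂_n ∈ NC_n` and `1̂_r ∈ NC_r`
    (topn : NCPart n) (htopn : topn.val = ⊤)
    (topr : NCPart r) (htopr : topr.val = ⊤) :
    (∑ π ∈ Finset.univ.filter (fun π : NCPart r => π ≤ topr),
        (∏ b ∈ blocks π.val, φ (orderedProd b Y)) * mur π topr)
      = ∑ τ ∈ Finset.univ.filter (fun τ => IsLUB ({τ, ρ} : Set (NCPart n)) topn),
          C τ :=
  stmt11_general φ X g hgmono hgsurj ρ hρ Y hY mu hmu mur hmur C hC topn htopn topr htopr
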